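/- arXiv:2105.07356 — 2 statements merged into one kernel-verified Lean document; each statement's English description precedes it below -/
import Mathlib

section
/- Let K = RatFunc ℚ with A = RatFunc.X. Let V be a K-vector space, s : V →ₗ[K] V a K-linear endomorphism, and W ⊆ V a subspace with s(W) ⊆ W. Let m : ℕ, and define Δ₋ = A • id - A⁻¹ • s, Δ₊ = A • s - A⁻¹ • id, and Δ₊ₘ = A^(4m+1) • s - A⁻¹ • id. Suppose L, R : ℤ → V are families satisfying: (1) s(L a) = L (a+2) and s(R a) = R (a+2) for all a ∈ ℤ; (2) L a - A^(2 m a) • R a ∈ W for all a ∈ ℤ; (3) there are p, q : ℕ with Δ₊^p (L a) ∈ W for all a ∈ ℤ and Δ₋^q (R a) ∈ W for all a ∈ ℤ. Then R a ∈ W and L a ∈ W for all a ∈ ℤ. -/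
/-!
Everything lives modulo the `s`-invariant subspace `W`, where polynomials in `s` act.
Since `Δ₊` preserves `W` and `L a ≡ A^(2ma) • R a`, both `Δ₊^p` and `Δ₋^q` kill `R a` modulo `W`.
As polynomials in `s`, `Δ₊ + A² Δ₋ = A³ - A⁻¹` is a nonzero constant (`A⁴ ≠ 1`), so `Δ₊^p` and
`Δ₋^q` are coprime and a Bézout identity gives `R a ∈ W`; then `L a ∈ W` as well.
-/

/-- The variable `A` of the field of rational functions `ℚ(A)`. -/
noncomputable def A : RatFunc ℚ := RatFunc.X

section DeltaOperators

open Polynomial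

namespace Submodule

variable {R V : Type*} [CommRing R] [AddCommGroup V] [Module R V]
  {s : Module.End R V} {W : Submodule R V}

theorem aeval_apply_mem (hW : ∀ w ∈ W, s w ∈ W) (f : R[X]) {w : V} (hw : w ∈ W) :
    aeval s f w ∈ W := by
  induction f using Polynomial.induction_on with
  | C c => simpa [Module.algebraMap_end_apply] using W.smul_mem c hw
  | add f g hf hg => simpa using W.add_mem hf hg
  | monomial n c ih =>
    rw [pow_succ', mul_left_comm, map_mul, aeval_X, Module.End.mul_apply]
    exact hW _ ih

theorem mem_of_aeval_mem_of_isCoprime (hW : ∀ w ∈ W, s w ∈ W) {P Q : R[X]}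
    (hPQ : IsCoprime P Q) {v : V} (hP : aeval s P v ∈ W) (hQ : aeval s Q v ∈ W) : v ∈ W := by
  obtain ⟨u, u', h⟩ := hPQ
  have hv : v = aeval s u (aeval s P v) + aeval s u' (aeval s Q v) := by
    simpa [Module.End.mul_apply] using congr($(congrArg (aeval s) h.symm) v)
  rw [hv]
  exact W.add_mem (aeval_apply_mem hW u hP) (aeval_apply_mem hW u' hQ)

end Submodule

theorem RatFunc.X_pow_ne_one {K : Type*} [Field K] {n : ℕ} (hn : n ≠ 0) :
    (RatFunc.X : RatFunc K) ^ n ≠ 1 := by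
  intro h
  have hdeg := congrArg RatFunc.intDegree h
  rw [RatFunc.intDegree_one, ← RatFunc.algebraMap_X, ← map_pow, RatFunc.intDegree_polynomial,
    natDegree_X_pow] at hdeg
  exact hn (by exact_mod_cast hdeg)

variable {K V : Type*} [Field K] [AddCommGroup V] [Module K V]

noncomputable def deltaPlusPoly (a : K) : K[X] := C a * X - C a⁻¹

noncomputable def deltaMinusPoly (a : K) : K[X] := C a - C a⁻¹ * X

theorem aeval_deltaPlusPoly (s : Module.End K V) (a : K) :
    aeval s (deltaPlusPoly a) = a • s - a⁻¹ • (1 : Module.End K V) := by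
  simp [deltaPlusPoly, Algebra.smul_def]

theorem aeval_deltaMinusPoly (s : Module.End K V) (a : K) :
    aeval s (deltaMinusPoly a) = a • (1 : Module.End K V) - a⁻¹ • s := by
  simp [deltaMinusPoly, Algebra.smul_def]

theorem deltaPlusPoly_add_C_mul_deltaMinusPoly {a : K} (ha : a ≠ 0) :
    deltaPlusPoly a + C (a ^ 2) * deltaMinusPoly a = C (a ^ 3 - a⁻¹) := by
  have e : a ^ 2 * a⁻¹ = a := by field_simp
  rw [deltaPlusPoly, deltaMinusPoly, mul_sub, ← mul_assoc, ← C_mul, ← C_mul, e]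
  simp only [map_sub, map_mul, map_pow]
  ring

theorem isCoprime_deltaPlusPoly_deltaMinusPoly {a : K} (ha : a ≠ 0) (ha4 : a ^ 4 ≠ 1) :
    IsCoprime (deltaPlusPoly a) (deltaMinusPoly a) := by
  have hc : a ^ 3 - a⁻¹ ≠ 0 := by
    intro h
    apply ha4
    field_simp at h
    linear_combination h
  refine ⟨C (a ^ 3 - a⁻¹)⁻¹, C ((a ^ 3 - a⁻¹)⁻¹ * a ^ 2), ?_⟩
  rw [C_mul, mul_assoc, ← mul_add, deltaPlusPoly_add_C_mul_deltaMinusPoly ha, ← C_mul,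
    inv_mul_cancel₀ hc, C_1]

end DeltaOperators

theorem stmt_8_general {V : Type*} [AddCommGroup V] [Module (RatFunc ℚ) V]
    (s : Module.End (RatFunc ℚ) V) (W : Submodule (RatFunc ℚ) V)
    (hW : ∀ w ∈ W, s w ∈ W) (m : ℕ) (L R : ℤ → V)
    (hLR : ∀ a : ℤ, L a - A ^ (2 * (m : ℤ) * a) • R a ∈ W)
    (p q : ℕ)
    (hp : ∀ a : ℤ, ((A • s - A⁻¹ • (1 : Module.End (RatFunc ℚ) V)) ^ p) (L a) ∈ W)
    (hq : ∀ a : ℤ, ((A • (1 : Module.End (RatFunc ℚ) V) - A⁻¹ • s) ^ q) (R a) ∈ W) :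
    ∀ a : ℤ, R a ∈ W ∧ L a ∈ W := by
  intro a
  have hA : A ≠ 0 := RatFunc.X_ne_zero
  have hRp : Polynomial.aeval s (deltaPlusPoly A ^ p) (R a) ∈ W := by
    have hdiff := Submodule.aeval_apply_mem hW (deltaPlusPoly A ^ p) (hLR a)
    rw [map_sub, map_smul, map_pow, aeval_deltaPlusPoly] at hdiff
    rw [map_pow, aeval_deltaPlusPoly, ← W.smul_mem_iff (zpow_ne_zero (2 * (m : ℤ) * a) hA)]
    simpa using W.sub_mem (hp a) hdiff
  have hRq : Polynomial.aeval s (deltaMinusPoly A ^ q) (R a) ∈ W := by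
    rw [map_pow, aeval_deltaMinusPoly]
    exact hq a
  have hcop := isCoprime_deltaPlusPoly_deltaMinusPoly hA (RatFunc.X_pow_ne_one four_ne_zero)
  have hRa : R a ∈ W := Submodule.mem_of_aeval_mem_of_isCoprime hW hcop.pow hRp hRq
  exact ⟨hRa, by simpa using W.add_mem (hLR a) (W.smul_mem (A ^ (2 * (m : ℤ) * a)) hRa)⟩

/-- Abstract form of Proposition 3.12: if `L a ≅ A^(2ma) • R a` modulo the `s`-invariant
subspace `W`, `s` shifts `a` by `2`, and `Δ₊^p (L a) ∈ W`, `Δ₋^q (R a) ∈ W` for all `a`,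
then `R a ∈ W` and `L a ∈ W` for all `a`. -/
theorem stmt_8 {V : Type*} [AddCommGroup V] [Module (RatFunc ℚ) V]
    (s : Module.End (RatFunc ℚ) V) (W : Submodule (RatFunc ℚ) V)
    (hW : ∀ w ∈ W, s w ∈ W) (m : ℕ) (L R : ℤ → V)
    (hL : ∀ a : ℤ, s (L a) = L (a + 2))
    (hR : ∀ a : ℤ, s (R a) = R (a + 2))
    (hLR : ∀ a : ℤ, L a - A ^ (2 * (m : ℤ) * a) • R a ∈ W)
    (p q : ℕ)
    (hp : ∀ a : ℤ, ((A • s - A⁻¹ • (1 : Module.End (RatFunc ℚ) V)) ^ p) (L a) ∈ W)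
    (hq : ∀ a : ℤ, ((A • (1 : Module.End (RatFunc ℚ) V) - A⁻¹ • s) ^ q) (R a) ∈ W) :
    ∀ a : ℤ, R a ∈ W ∧ L a ∈ W :=
  stmt_8_general s W hW m L R hLR p q hp hq
end

section
/- Let K = RatFunc ℚ with A = RatFunc.X. Let V be a K-vector space, s : V →ₗ[K] V a K-linear endomorphism, and Δ₋ = A • id - A⁻¹ • s. Suppose D : ℤ → ℤ → List Bool → V is a family satisfying, for all k, a ∈ ℤ and all lists ℓ of Booleans: (a) s (D k a ℓ) = D k (a+2) ℓ, and (b) A • D k a ℓ - A⁻¹ • D k (a+2) ℓ = A • D (k+1) (a+1) (ℓ ++ [true]) - A⁻¹ • D (k+1) a (ℓ ++ [false]). Then for every n ≥ 1 and all k₀, a ∈ ℤ: Δ₋^n (D k₀ a []) = Σ_{e : Fin n → Bool} (-1)^(z(e)) A^(o(e) - z(e)) • D (k₀ + n) (a + o(e)) (List.ofFn e), where o(e) is the number of indices i with e i = true, z(e) = n - o(e), and A^(o(e)-z(e)) is an integer power of the unit A. -/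
/-- The number of `true` entries of `e : Fin n → Bool`. -/
def ones {n : ℕ} (e : Fin n → Bool) : ℕ := (Finset.univ.filter fun i => e i = true).card

/-- The number of `false` entries of `e : Fin n → Bool`. -/
def zeros {n : ℕ} (e : Fin n → Bool) : ℕ := n - ones e

lemma A_ne_zero : A ≠ 0 := RatFunc.X_ne_zero

lemma ones_le {n : ℕ} (e : Fin n → Bool) : ones e ≤ n := by
  simpa [ones] using (Finset.card_filter_le Finset.univ fun i => e i = true)

lemma ones_cons {n : ℕ} (b : Bool) (e : Fin n → Bool) :
    ones (Fin.cons b e) = (if b then 1 else 0) + ones e := by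
  simp only [ones, Finset.card_filter]
  rw [Fin.sum_univ_succ]
  simp

lemma zeros_cons {n : ℕ} (b : Bool) (e : Fin n → Bool) :
    zeros (Fin.cons b e) = (if b then 0 else 1) + zeros e := by
  have h := ones_le e
  simp only [zeros, ones_cons]
  cases b <;> simp <;> omega

lemma ones_cons_true {n : ℕ} (e : Fin n → Bool) :
    ones (Fin.cons true e) = 1 + ones e := by simp [ones_cons]

lemma ones_cons_false {n : ℕ} (e : Fin n → Bool) :
    ones (Fin.cons false e) = ones e := by simp [ones_cons]

lemma zeros_cons_true {n : ℕ} (e : Fin n → Bool) :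
    zeros (Fin.cons true e) = zeros e := by simp [zeros_cons]

lemma zeros_cons_false {n : ℕ} (e : Fin n → Bool) :
    zeros (Fin.cons false e) = 1 + zeros e := by simp [zeros_cons]

lemma ofFn_cons {n : ℕ} (b : Bool) (e : Fin n → Bool) :
    List.ofFn (Fin.cons b e) = b :: List.ofFn e := by
  rw [List.ofFn_succ]
  simp

open Finset in
lemma key {V : Type*} [AddCommGroup V] [Module (RatFunc ℚ) V]
    (s : Module.End (RatFunc ℚ) V) (D : ℤ → ℤ → List Bool → V)
    (ha : ∀ (k a : ℤ) (ℓ : List Bool), s (D k a ℓ) = D k (a + 2) ℓ)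
    (hb : ∀ (k a : ℤ) (ℓ : List Bool),
      A • D k a ℓ - A⁻¹ • D k (a + 2) ℓ
        = A • D (k + 1) (a + 1) (ℓ ++ [true]) - A⁻¹ • D (k + 1) a (ℓ ++ [false])) :
    ∀ n : ℕ, ∀ k a : ℤ, ∀ ℓ : List Bool,
      ((A • (1 : Module.End (RatFunc ℚ) V) - A⁻¹ • s) ^ n) (D k a ℓ)
        = ∑ e : Fin n → Bool,
            ((-1 : RatFunc ℚ) ^ zeros e * A ^ ((ones e : ℤ) - (zeros e : ℤ)))
              • D (k + n) (a + ones e) (ℓ ++ List.ofFn e) := by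
  intro n
  induction n with
  | zero =>
    intro k a ℓ
    simp [ones, zeros]
  | succ n ih =>
    intro k a ℓ
    have hstep : ((A • (1 : Module.End (RatFunc ℚ) V) - A⁻¹ • s) ^ (n + 1)) (D k a ℓ)
        = ((A • (1 : Module.End (RatFunc ℚ) V) - A⁻¹ • s) ^ n)
            ((A • (1 : Module.End (RatFunc ℚ) V) - A⁻¹ • s) (D k a ℓ)) := by
      rw [pow_succ]; rfl
    have hone : (A • (1 : Module.End (RatFunc ℚ) V) - A⁻¹ • s) (D k a ℓ)
        = A • D (k + 1) (a + 1) (ℓ ++ [true]) - A⁻¹ • D (k + 1) a (ℓ ++ [false]) := by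
      rw [← hb]
      simp [ha]
    rw [hstep, hone, map_sub, map_smul, map_smul, ih, ih]
    -- reindex the RHS sum
    rw [← Equiv.sum_comp (Fin.consEquiv fun _ => Bool)
      (fun e => ((-1 : RatFunc ℚ) ^ zeros e * A ^ ((ones e : ℤ) - (zeros e : ℤ)))
        • D (k + (n + 1 : ℕ)) (a + ones e) (ℓ ++ List.ofFn e))]
    rw [Fintype.sum_prod_type, Fintype.sum_bool]
    simp only [Fin.consEquiv, Equiv.coe_fn_mk, ones_cons_true, ones_cons_false,
      zeros_cons_true, zeros_cons_false, ofFn_cons]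
    rw [smul_sum, smul_sum, sub_eq_add_neg, ← Finset.sum_neg_distrib]
    congr 1
    · -- true part
      refine Finset.sum_congr rfl fun e _ => ?_
      rw [smul_smul]
      have harg1 : (k + 1 + (n : ℤ)) = k + ((n : ℕ) + 1 : ℕ) := by push_cast; ring
      have harg2 : (a + 1 + (ones e : ℤ)) = a + ((1 + ones e : ℕ) : ℤ) := by push_cast; ring
      have harg3 : (ℓ ++ [true]) ++ List.ofFn e = ℓ ++ true :: List.ofFn e := by simp
      rw [harg1, harg2, harg3]
      congr 1
      have : ((1 + ones e : ℕ) : ℤ) - ((zeros e : ℕ) : ℤ)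
          = ((ones e : ℤ) - (zeros e : ℤ)) + 1 := by push_cast; ring
      rw [this, zpow_add_one₀ A_ne_zero]
      ring
    · -- false part
      refine Finset.sum_congr rfl fun e _ => ?_
      rw [smul_smul, ← neg_smul]
      have harg1 : (k + 1 + (n : ℤ)) = k + ((n : ℕ) + 1 : ℕ) := by push_cast; ring
      have harg2 : (a + (ones e : ℤ)) = a + ((ones e : ℕ) : ℤ) := rfl
      have harg3 : (ℓ ++ [false]) ++ List.ofFn e = ℓ ++ false :: List.ofFn e := by simp
      rw [harg1, harg2, harg3]
      congr 1
      have : ((ones e : ℕ) : ℤ) - ((1 + zeros e : ℕ) : ℤ)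
          = ((ones e : ℤ) - (zeros e : ℤ)) - 1 := by push_cast; ring
      rw [this, zpow_sub_one₀ A_ne_zero]
      ring

open Finset in
/-- Abstract form of Lemma 3.8(ii): `Δ₋^n (D k₀ a []) = Σ_e (-1)^{z(e)} A^{o(e)-z(e)} •
D (k₀+n) (a+o(e)) (ofFn e)`, where the recursion (b) encodes Lemma 3.6 (i)-(ii). -/
theorem stmt_11 {V : Type*} [AddCommGroup V] [Module (RatFunc ℚ) V]
    (s : Module.End (RatFunc ℚ) V) (D : ℤ → ℤ → List Bool → V)
    (ha : ∀ (k a : ℤ) (ℓ : List Bool), s (D k a ℓ) = D k (a + 2) ℓ)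
    (hb : ∀ (k a : ℤ) (ℓ : List Bool),
      A • D k a ℓ - A⁻¹ • D k (a + 2) ℓ
        = A • D (k + 1) (a + 1) (ℓ ++ [true]) - A⁻¹ • D (k + 1) a (ℓ ++ [false])) :
    ∀ n : ℕ, 1 ≤ n → ∀ k₀ a : ℤ,
      ((A • (1 : Module.End (RatFunc ℚ) V) - A⁻¹ • s) ^ n) (D k₀ a [])
        = ∑ e : Fin n → Bool,
            ((-1 : RatFunc ℚ) ^ zeros e * A ^ ((ones e : ℤ) - (zeros e : ℤ)))
              • D (k₀ + n) (a + ones e) (List.ofFn e) := by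
  intro n _ k₀ a
  simpa using key s D ha hb n k₀ a []
end
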